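/- arXiv:math/0506289 — 3 statements merged into one kernel-verified Lean document; each statement's English description precedes it below -/
import Mathlib

section
/- Let δ > 0 and ε′ > 1 be real numbers and set q = 4. Then the Debye–Joseph et al. characteristic polynomial φ₀(Z) = (1 + δε′)Z³ − (3 + δε′ − 4(1 + δ))Z² + (3 − δε′ − 4(1 − δ))Z − (1 − δε′) is a simple von Neumann polynomial. -/
open Polynomial

/-- A Schur polynomial: all roots lie strictly inside the unit disk. -/
def IsSchur (p : Polynomial ℂ) : Prop :=
  ∀ z : ℂ, p.IsRoot z → ‖z‖ < 1

/-- A simple von Neumann polynomial: all roots lie in the closed unit disk and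
every root on the unit circle is simple. -/
def IsSimpleVonNeumann (p : Polynomial ℂ) : Prop :=
  ∀ z : ℂ, p.IsRoot z → ‖z‖ ≤ 1 ∧
    (‖z‖ = 1 → Polynomial.rootMultiplicity z p = 1)

/-!
Since `φ₀(-1) = 0`, the polynomial factors as `(Z + 1) ψ(Z)` with the real quadratic
`ψ(Z) = (1 + δε′) Z² + (4δ - 2δε′) Z + (δε′ - 1)`. The Jury conditions `ψ(1) = 4δ > 0`,
`ψ(-1) = 4δ(ε′ - 1) > 0` and `|δε′ - 1| < 1 + δε′` make `ψ` a Schur polynomial, so the only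
root of `φ₀` on the unit circle is the simple root `-1`.
-/

open ComplexConjugate

lemma abs_lt_one_of_quadratic_eq_zero {a b c x : ℝ} (h1 : 0 < a + b + c) (h2 : 0 < a - b + c)
    (hca : c < a) (hx : a * x ^ 2 + b * x + c = 0) : |x| < 1 := by
  rw [abs_lt]
  constructor <;> nlinarith [sq_nonneg (x + 1), sq_nonneg (x - 1)]

/-- For a non-real root of a real quadratic, the other root is its conjugate, so Vieta's
product formula reads `a |z|² = c`. -/
lemma mul_normSq_eq_of_quadratic_eq_zero {a b c : ℝ} {z : ℂ} (him : z.im ≠ 0)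
    (hz : (a : ℂ) * z ^ 2 + b * z + c = 0) : a * Complex.normSq z = c := by
  have hconj : (a : ℂ) * conj z ^ 2 + b * conj z + c = 0 := by
    simpa using congrArg conj hz
  have hdiff_ne : z - conj z ≠ 0 := by
    rw [sub_ne_zero, ne_comm, Ne, Complex.conj_eq_iff_im]
    exact him
  have hsum : (a : ℂ) * (z + conj z) + b = 0 := by
    refine (mul_eq_zero.mp ?_).resolve_left hdiff_ne
    linear_combination hz - hconj
  have hprod : (a : ℂ) * (z * conj z) = c := by
    linear_combination z * hsum - hz
  rw [Complex.mul_conj] at hprod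
  exact_mod_cast hprod

lemma isSchur_quadratic {a b c : ℝ} (h1 : 0 < a + b + c) (h2 : 0 < a - b + c) (hca : c < a) :
    IsSchur (C (a : ℂ) * X ^ 2 + C (b : ℂ) * X + C (c : ℂ)) := by
  intro z hz
  have hz' : (a : ℂ) * z ^ 2 + b * z + c = 0 := by simpa using hz
  by_cases him : z.im = 0
  · have hx : a * z.re ^ 2 + b * z.re + c = 0 := by
      have hre := congrArg Complex.re hz'
      simp only [Complex.add_re, Complex.mul_re, Complex.ofReal_re, Complex.ofReal_im, sq,
        him, Complex.zero_re] at hre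
      linear_combination hre
    rw [← Complex.re_add_im z, him, Complex.ofReal_zero, zero_mul, add_zero, Complex.norm_real,
      Real.norm_eq_abs]
    exact abs_lt_one_of_quadratic_eq_zero h1 h2 hca hx
  · have hnormSq := mul_normSq_eq_of_quadratic_eq_zero him hz'
    have hsq : ‖z‖ ^ 2 < 1 := by
      rw [Complex.sq_norm]
      nlinarith [Complex.normSq_nonneg z]
    nlinarith [norm_nonneg z]

lemma IsSchur.ne_zero {p : ℂ[X]} (hp : IsSchur p) : p ≠ 0 := by
  rintro rfl
  simpa using hp 1 (eval_zero (x := 1))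

lemma IsSchur.isSimpleVonNeumann_X_sub_C_mul {p : ℂ[X]} (hp : IsSchur p) {w : ℂ}
    (hw : ‖w‖ ≤ 1) : IsSimpleVonNeumann ((X - C w) * p) := by
  intro z hz
  rcases mul_eq_zero.mp (by simpa using hz : (z - w) * p.eval z = 0) with hzw | hpz
  · obtain rfl := sub_eq_zero.mp hzw
    refine ⟨hw, fun hz1 => ?_⟩
    have hpz : ¬ p.IsRoot z := fun h => (hp z h).ne hz1
    rw [rootMultiplicity_mul (mul_ne_zero (X_sub_C_ne_zero z) hp.ne_zero),
      rootMultiplicity_X_sub_C_self, rootMultiplicity_eq_zero hpz]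
  · have hz1 := hp z hpz
    exact ⟨hz1.le, fun h => absurd h hz1.ne⟩

/-- Debye–Joseph et al. at the limit CFL value `q = 4`: for `δ > 0` and `ε′ > 1`
the characteristic polynomial is a simple von Neumann polynomial. -/
theorem debye_joseph_vonNeumann_q_four (δ ε' : ℝ) (hδ : 0 < δ) (hε : 1 < ε') :
    IsSimpleVonNeumann (Polynomial.C ((1 + δ * ε' : ℝ) : ℂ) * Polynomial.X ^ 3
      - Polynomial.C ((3 + δ * ε' - 4 * (1 + δ) : ℝ) : ℂ) * Polynomial.X ^ 2
      + Polynomial.C ((3 - δ * ε' - 4 * (1 - δ) : ℝ) : ℂ) * Polynomial.X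
      - Polynomial.C ((1 - δ * ε' : ℝ) : ℂ)) := by
  have hfactor : C ((1 + δ * ε' : ℝ) : ℂ) * X ^ 3 - C ((3 + δ * ε' - 4 * (1 + δ) : ℝ) : ℂ) * X ^ 2
      + C ((3 - δ * ε' - 4 * (1 - δ) : ℝ) : ℂ) * X - C ((1 - δ * ε' : ℝ) : ℂ)
      = (X - C (-1)) * (C ((1 + δ * ε' : ℝ) : ℂ) * X ^ 2
        + C ((4 * δ - 2 * δ * ε' : ℝ) : ℂ) * X + C ((δ * ε' - 1 : ℝ) : ℂ)) := by
    simp only [map_neg, sub_neg_eq_add, Complex.ofReal_add, Complex.ofReal_sub,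
      Complex.ofReal_mul, Complex.ofReal_one, Complex.ofReal_ofNat, map_add, map_sub, map_mul,
      map_one, map_ofNat]
    ring
  rw [hfactor]
  have hschur := isSchur_quadratic (a := 1 + δ * ε') (b := 4 * δ - 2 * δ * ε') (c := δ * ε' - 1)
    (by linarith) (by nlinarith) (by linarith)
  exact hschur.isSimpleVonNeumann_X_sub_C_mul (by simp)
end

section
/- Let δ > 0, ω > 0, ε′ > 1 and q > 0 be real numbers such that either (0 < q < 2 and ω(2ε′ − 1) ≤ 2) or (q = 2 and ω(2ε′ − 1) < 2). Then the Lorentz–Young characteristic polynomial φ₀(Z) = (1 + δ)Z⁴ − (4 + 2δ − 2ωε′ − (1 + δ)q)Z³ + 2(3 − 2ωε′ + (ω − 1)q)Z² − (4 − 2δ − 2ωε′ − (1 − δ)q)Z + (1 − δ) is a Schur polynomial. -/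
open Polynomial

/-!
Under the Cayley transform `s = (z - 1) / (z + 1)`, which maps `‖z‖ ≥ 1` into `Re s ≥ 0`,
`16 φ₀(z) = (z + 1)⁴ P(s)` for a real quartic `P = a₄s⁴ + a₃s³ + a₂s² + a₁s + a₀` with positive
`a₄, a₃, a₁, a₀` satisfying the Routh–Hurwitz inequality `a₄a₁² + a₀a₃² < a₁a₂a₃`; the gap is
`512 δ²qω(ε′ - 1)`. Such a `P` has no root in `Re s ≥ 0`: the Hurwitz inequality says the even part
`E(s²) = a₄s⁴ + a₂s² + a₀` is negative at the zero `t₀ = -a₁/a₃` of the odd part `s O(s²)`, so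
`E(u) = a₄(u - t₁)(u - t₂)` with `t₁ < t₀ < t₂ < 0`, and partial fractions show
`Re (s O(s²) / E(s²)) ≥ 0` there, while `P(s) = 0` would force this quotient to be `-1`.
-/

lemma Complex.re_div_sq_sub_ofReal_nonneg {s : ℂ} (hs : 0 ≤ s.re) {t : ℝ} (ht : t ≤ 0) :
    0 ≤ (s / (s ^ 2 - t)).re := by
  rw [Complex.div_re, ← add_div]
  apply div_nonneg _ (Complex.normSq_nonneg _)
  simp only [pow_two, Complex.sub_re, Complex.sub_im, Complex.mul_re, Complex.mul_im,
    Complex.ofReal_re, Complex.ofReal_im]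
  nlinarith [mul_nonneg hs
    (add_nonneg (add_nonneg (sq_nonneg s.re) (sq_nonneg s.im)) (neg_nonneg.2 ht))]

lemma re_mul_div_nonneg_of_interlacing {t₁ t₀ t₂ : ℝ} (h₁₂ : t₁ < t₂) (h₁₀ : t₁ ≤ t₀)
    (h₀₂ : t₀ ≤ t₂) (h₂ : t₂ ≤ 0) {s : ℂ} (hs : 0 ≤ s.re) (hs₁ : s ^ 2 - t₁ ≠ 0)
    (hs₂ : s ^ 2 - t₂ ≠ 0) :
    0 ≤ (s * (s ^ 2 - t₀) / ((s ^ 2 - t₁) * (s ^ 2 - t₂))).re := by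
  have hgap : ((t₂ - t₁ : ℝ) : ℂ) ≠ 0 := by exact_mod_cast (sub_pos.2 h₁₂).ne'
  -- partial fractions: `u - t₀` is a convex combination of `u - t₁` and `u - t₂`
  have hpf : s * (s ^ 2 - t₀) / ((s ^ 2 - t₁) * (s ^ 2 - t₂))
      = ((t₂ - t₀) / (t₂ - t₁) : ℝ) * (s / (s ^ 2 - t₂))
        + ((t₀ - t₁) / (t₂ - t₁) : ℝ) * (s / (s ^ 2 - t₁)) := by
    push_cast at hgap ⊢
    field_simp
    ring
  rw [hpf, Complex.add_re, Complex.re_ofReal_mul, Complex.re_ofReal_mul]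
  have hw : 0 < t₂ - t₁ := sub_pos.2 h₁₂
  exact add_nonneg
    (mul_nonneg (div_nonneg (sub_nonneg.2 h₀₂) hw.le)
      (Complex.re_div_sq_sub_ofReal_nonneg hs h₂))
    (mul_nonneg (div_nonneg (sub_nonneg.2 h₁₀) hw.le)
      (Complex.re_div_sq_sub_ofReal_nonneg hs (h₁₂.le.trans h₂)))

lemma quadratic_exists_neg_roots_around {a b c t₀ : ℝ} (ha : 0 < a) (hc : 0 < c) (ht₀ : t₀ < 0)
    (hneg : a * t₀ ^ 2 + b * t₀ + c < 0) :
    ∃ t₁ t₂ : ℝ, t₁ < t₀ ∧ t₀ < t₂ ∧ t₂ < 0 ∧ a * (t₁ + t₂) = -b ∧ a * (t₁ * t₂) = c := by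
  have hdisc : 0 < b ^ 2 - 4 * a * c := by
    nlinarith [sq_nonneg (2 * a * t₀ + b)]
  set r := √(b ^ 2 - 4 * a * c)
  have hr : 0 < r := Real.sqrt_pos.2 hdisc
  have hr2 : r ^ 2 = b ^ 2 - 4 * a * c := Real.sq_sqrt hdisc.le
  obtain ⟨t₁, t₂, h₁₂, hsum, hprod⟩ :
      ∃ t₁ t₂ : ℝ, t₁ < t₂ ∧ a * (t₁ + t₂) = -b ∧ a * (t₁ * t₂) = c := by
    refine ⟨(-b - r) / (2 * a), (-b + r) / (2 * a), ?_, ?_, ?_⟩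
    · gcongr; linarith
    · field_simp; ring
    · field_simp; linear_combination -hr2
  have hfac : a * ((t₀ - t₁) * (t₀ - t₂)) = a * t₀ ^ 2 + b * t₀ + c := by
    linear_combination (-t₀) * hsum + hprod
  have hbetween : (t₀ - t₁) * (t₀ - t₂) < 0 := by nlinarith
  have h₁₀ : t₁ < t₀ := by nlinarith
  have h₀₂ : t₀ < t₂ := by nlinarith
  have h₂ : t₂ < 0 := by
    have : 0 < t₁ * t₂ := pos_of_mul_pos_right (hprod ▸ hc) ha.le
    nlinarith
  exact ⟨t₁, t₂, h₁₀, h₀₂, h₂, hsum, hprod⟩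

theorem quartic_ne_zero_of_re_nonneg {a₄ a₃ a₂ a₁ a₀ : ℝ} (h₄ : 0 < a₄) (h₃ : 0 < a₃)
    (h₁ : 0 < a₁) (h₀ : 0 < a₀) (hH : a₄ * a₁ ^ 2 + a₀ * a₃ ^ 2 < a₁ * a₂ * a₃)
    {s : ℂ} (hs : 0 ≤ s.re) :
    (a₄ : ℂ) * s ^ 4 + a₃ * s ^ 3 + a₂ * s ^ 2 + a₁ * s + a₀ ≠ 0 := by
  intro hP
  set t₀ := -a₁ / a₃ with ht₀
  have hodd : a₃ * t₀ = -a₁ := by rw [ht₀]; field_simp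
  have heven : a₄ * t₀ ^ 2 + a₂ * t₀ + a₀ < 0 := by
    have : (a₄ * t₀ ^ 2 + a₂ * t₀ + a₀) * a₃ ^ 2 = a₄ * a₁ ^ 2 + a₀ * a₃ ^ 2 - a₁ * a₂ * a₃ := by
      rw [ht₀]; field_simp; ring
    nlinarith [pow_pos h₃ 2]
  obtain ⟨t₁, t₂, h₁₀, h₀₂, h₂, hsum, hprod⟩ :=
    quadratic_exists_neg_roots_around h₄ h₀ (div_neg_of_neg_of_pos (neg_neg_of_pos h₁) h₃) heven
  have hsplit : (a₄ : ℂ) * ((s ^ 2 - t₁) * (s ^ 2 - t₂)) + a₃ * (s * (s ^ 2 - t₀)) = 0 := by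
    have hsum' : (a₄ : ℂ) * (t₁ + t₂) = -a₂ := by exact_mod_cast hsum
    have hprod' : (a₄ : ℂ) * (t₁ * t₂) = a₀ := by exact_mod_cast hprod
    have hodd' : (a₃ : ℂ) * t₀ = -a₁ := by exact_mod_cast hodd
    linear_combination hP - s ^ 2 * hsum' + hprod' - s * hodd'
  have h₃' : (a₃ : ℂ) ≠ 0 := by exact_mod_cast h₃.ne'
  by_cases heven0 : (s ^ 2 - t₁) * (s ^ 2 - t₂) = 0
  · have hodd0 : s * (s ^ 2 - t₀) = 0 := by
      simpa [heven0, h₃'] using hsplit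
    rcases mul_eq_zero.1 hodd0 with rfl | hs₀
    · exact h₀.ne' (by simpa using hP)
    · rw [sub_eq_zero.1 hs₀] at heven0
      have : (t₀ - t₁) * (t₀ - t₂) = 0 := by exact_mod_cast heven0
      rcases mul_eq_zero.1 this with h | h <;> linarith
  · have hre := re_mul_div_nonneg_of_interlacing (h₁₀.trans h₀₂) h₁₀.le h₀₂.le h₂.le hs
      (left_ne_zero_of_mul heven0) (right_ne_zero_of_mul heven0)
    have hval : s * (s ^ 2 - t₀) / ((s ^ 2 - t₁) * (s ^ 2 - t₂)) = ((-a₄ / a₃ : ℝ) : ℂ) := by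
      rw [div_eq_iff heven0]
      push_cast
      field_simp
      linear_combination hsplit
    rw [hval, Complex.ofReal_re] at hre
    exact absurd hre (not_le.2 (div_neg_of_neg_of_pos (neg_neg_of_pos h₄) h₃))

lemma Complex.re_sub_one_div_add_one_nonneg {z : ℂ} (hz : 1 ≤ ‖z‖) :
    0 ≤ ((z - 1) / (z + 1)).re := by
  rw [Complex.div_re, ← add_div]
  apply div_nonneg _ (Complex.normSq_nonneg _)
  have : 1 ≤ Complex.normSq z := by rw [← Complex.sq_norm]; nlinarith
  simp only [Complex.sub_re, Complex.add_re, Complex.sub_im, Complex.add_im,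
    Complex.one_re, Complex.one_im, Complex.normSq_apply] at this ⊢
  nlinarith

lemma quartic_cayley {z : ℂ} (hz : z + 1 ≠ 0) (a₄ a₃ a₂ a₁ a₀ : ℂ) :
    (z + 1) ^ 4 * (a₄ * ((z - 1) / (z + 1)) ^ 4 + a₃ * ((z - 1) / (z + 1)) ^ 3
      + a₂ * ((z - 1) / (z + 1)) ^ 2 + a₁ * ((z - 1) / (z + 1)) + a₀)
      = a₄ * (z - 1) ^ 4 + a₃ * (z - 1) ^ 3 * (z + 1) + a₂ * (z - 1) ^ 2 * (z + 1) ^ 2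
        + a₁ * (z - 1) * (z + 1) ^ 3 + a₀ * (z + 1) ^ 4 := by
  field_simp

/-- Lorentz–Young (an-harmonic case): for `δ > 0`, `ω > 0`, `ε′ > 1` and `q > 0`
with either (`0 < q < 2` and `ω(2ε′ − 1) ≤ 2`) or (`q = 2` and `ω(2ε′ − 1) < 2`),
the characteristic polynomial is a Schur polynomial. -/
theorem lorentz_young_schur (δ ω ε' q : ℝ) (hδ : 0 < δ) (hω : 0 < ω)
    (hε : 1 < ε') (hq0 : 0 < q)
    (hcond : (q < 2 ∧ ω * (2 * ε' - 1) ≤ 2) ∨ (q = 2 ∧ ω * (2 * ε' - 1) < 2)) :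
    IsSchur (Polynomial.C ((1 + δ : ℝ) : ℂ) * Polynomial.X ^ 4
      - Polynomial.C ((4 + 2 * δ - 2 * ω * ε' - (1 + δ) * q : ℝ) : ℂ) *
          Polynomial.X ^ 3
      + Polynomial.C ((2 * (3 - 2 * ω * ε' + (ω - 1) * q) : ℝ) : ℂ) *
          Polynomial.X ^ 2
      - Polynomial.C ((4 - 2 * δ - 2 * ω * ε' - (1 - δ) * q : ℝ) : ℂ) *
          Polynomial.X
      + Polynomial.C ((1 - δ : ℝ) : ℂ)) := by
  intro z hz
  by_contra! hz1
  simp only [IsRoot.def, eval_add, eval_sub, eval_mul, eval_pow, eval_C, eval_X] at hz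
  have hq : q ≤ 2 := by rcases hcond with ⟨h, _⟩ | ⟨h, _⟩ <;> linarith
  have ha₄ : 0 < 16 - 8 * ω * ε' - 4 * q + 2 * ω * q := by
    rcases hcond with ⟨h₁, h₂⟩ | ⟨rfl, h₂⟩
    · nlinarith [mul_pos (sub_pos.2 hε) (sub_pos.2 h₁),
        mul_nonneg (sub_nonneg.2 h₂) (by linarith : (0 : ℝ) ≤ 4 * ε' - q)]
    · nlinarith
  have hHurwitz : (16 - 8 * ω * ε' - 4 * q + 2 * ω * q) * (4 * δ * q) ^ 2
      + 2 * ω * q * (4 * δ * (4 - q)) ^ 2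
      < 4 * δ * q * (8 * ω * ε' + 4 * q - 4 * ω * q) * (4 * δ * (4 - q)) := by
    have hgap : 0 < 512 * δ ^ 2 * q * ω * (ε' - 1) := by have := sub_pos.2 hε; positivity
    linear_combination hgap
  have hz₁ : z + 1 ≠ 0 := by
    intro h
    rw [eq_neg_of_add_eq_zero_left h] at hz
    have : ((16 - 8 * ω * ε' - 4 * q + 2 * ω * q : ℝ) : ℂ) = 0 := by
      push_cast at hz ⊢; linear_combination hz
    exact ha₄.ne' (by exact_mod_cast this)
  refine quartic_ne_zero_of_re_nonneg ha₄ (by nlinarith) (by positivity) (by positivity) hHurwitz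
    (Complex.re_sub_one_div_add_one_nonneg hz1) ?_
  refine (mul_eq_zero.1 ?_).resolve_left (pow_ne_zero 4 hz₁)
  rw [quartic_cayley hz₁]
  push_cast at hz ⊢
  linear_combination 16 * hz
end

section
/- Let ω > 0, λ > 0 and ξ ∈ ℝ satisfy q := 4λ²sin²(ξ/2) = 2ω and 0 < q ≤ 2, and let G be the 4 × 4 complex matrix with rows (1, −λ(e^{iξ} − 1), 0, 0), (−λ(1 − e^{−iξ}), 1 − q, 2ω, −1), (0, 0, 1 − 2ω, 1), (0, 0, −2ω, 1). Then the powers of G are not uniformly bounded: there is no constant C with ‖Gⁿ‖ ≤ C for all n. -/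
/-!
At resonance `q = 2ω` the two `2 × 2` diagonal blocks of `G` (the field block and the
polarization block) share the characteristic polynomial `μ² - (2 - q)μ + 1`, because the
off-diagonal entries of the field block multiply to `-4λ²sin²(ξ/2) = -q`. For `0 < q ≤ 2`
its roots lie on the unit circle, and the coupling between the blocks turns the double
eigenvalue `μ` into a Jordan block: `G v = μ v`, `G w = μ w + v`. Then
`Gⁿ⁺¹ w = μⁿ⁺¹ w + (n + 1) μⁿ v` grows linearly in `n`.
-/

attribute [local instance] Matrix.frobeniusNormedAddCommGroup

open Matrix WithLp

theorem Module.End.pow_succ_apply_of_jordan_chain {R M : Type*} [CommSemiring R]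
    [AddCommMonoid M] [Module R M] {f : Module.End R M} {μ : R} {v w : M}
    (hv : f v = μ • v) (hw : f w = μ • w + v) (k : ℕ) :
    (f ^ (k + 1)) w = μ ^ (k + 1) • w + ((k + 1) * μ ^ k) • v := by
  induction k with
  | zero => simpa using hw
  | succ k ih =>
    rw [pow_succ', Module.End.mul_apply, ih, map_add, map_smul, map_smul, hv, hw]
    push_cast
    module

theorem Matrix.frobenius_norm_mulVec_le {m n 𝕜 : Type*} [Fintype m] [Fintype n] [RCLike 𝕜]
    (A : Matrix m n 𝕜) (v : n → 𝕜) :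
    ‖toLp 2 (A *ᵥ v)‖ ≤ ‖A‖ * ‖toLp 2 v‖ := by
  simpa only [← frobenius_norm_replicateCol (ι := Unit), replicateCol_mulVec]
    using frobenius_norm_mul A (replicateCol Unit v)

theorem Matrix.not_bounded_norm_pow_of_jordan_chain {n 𝕜 : Type*} [Fintype n] [DecidableEq n]
    [RCLike 𝕜] {M : Matrix n n 𝕜} {μ : 𝕜} {v w : n → 𝕜} (hμ : ‖μ‖ = 1) (hv₀ : v ≠ 0)
    (hv : M *ᵥ v = μ • v) (hw : M *ᵥ w = μ • w + v) :
    ¬ ∃ C : ℝ, ∀ k : ℕ, ‖M ^ k‖ ≤ C := by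
  rintro ⟨C, hC⟩
  have hchain (k : ℕ) : M ^ (k + 1) *ᵥ w = μ ^ (k + 1) • w + ((k + 1) * μ ^ k) • v := by
    simpa only [← toLin'_pow, toLin'_apply] using
      Module.End.pow_succ_apply_of_jordan_chain (f := toLin' M) hv hw k
  have hv_pos : 0 < ‖toLp 2 v‖ := by simpa using hv₀
  have hgrowth (k : ℕ) : (k + 1) * ‖toLp 2 v‖ ≤ (C + 1) * ‖toLp 2 w‖ := by
    have hcoeff : ‖((k + 1) * μ ^ k : 𝕜)‖ = k + 1 := by
      rw [norm_mul, norm_pow, hμ, one_pow, mul_one]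
      exact_mod_cast RCLike.norm_natCast (K := 𝕜) (k + 1)
    calc (k + 1) * ‖toLp 2 v‖
        = ‖toLp 2 (M ^ (k + 1) *ᵥ w) - μ ^ (k + 1) • toLp 2 w‖ := by
          rw [hchain, toLp_add, toLp_smul, toLp_smul, add_sub_cancel_left, norm_smul, hcoeff]
      _ ≤ ‖M ^ (k + 1)‖ * ‖toLp 2 w‖ + ‖toLp 2 w‖ := by
          grw [norm_sub_le, frobenius_norm_mulVec_le, norm_smul, norm_pow, hμ, one_pow, one_mul]
      _ ≤ (C + 1) * ‖toLp 2 w‖ := by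
          rw [add_mul, one_mul]
          grw [hC]
  obtain ⟨k, hk⟩ := exists_nat_gt ((C + 1) * ‖toLp 2 w‖ / ‖toLp 2 v‖)
  rw [div_lt_iff₀ hv_pos] at hk
  linarith [hgrowth k]

theorem Complex.exists_norm_eq_one_and_sq_eq_two_mul_sub_one {c : ℝ} (hc : |c| ≤ 1) :
    ∃ μ : ℂ, ‖μ‖ = 1 ∧ μ ^ 2 = 2 * c * μ - 1 := by
  obtain ⟨hc₁, hc₂⟩ := abs_le.mp hc
  have hsc : (Real.sin (Real.arccos c) : ℂ) ^ 2 + (c : ℂ) ^ 2 = 1 := by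
    exact_mod_cast Real.cos_arccos hc₁ hc₂ ▸ Real.sin_sq_add_cos_sq (Real.arccos c)
  refine ⟨Complex.exp (Real.arccos c * Complex.I), Complex.norm_exp_ofReal_mul_I _, ?_⟩
  rw [Complex.exp_mul_I, ← Complex.ofReal_cos, ← Complex.ofReal_sin, Real.cos_arccos hc₁ hc₂]
  linear_combination (Real.sin (Real.arccos c) : ℂ) ^ 2 * Complex.I_sq - hsc

theorem Complex.exp_mul_I_sub_one_mul_one_sub_exp_neg_mul_I (ξ : ℝ) :
    (Complex.exp (ξ * Complex.I) - 1) * (1 - Complex.exp (-ξ * Complex.I)) =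
      -(4 * Real.sin (ξ / 2) ^ 2 : ℝ) := by
  have h : (ξ : ℂ) = 2 * (ξ / 2 : ℂ) := by ring
  rw [h, neg_mul, ← neg_mul, Complex.exp_mul_I, Complex.exp_mul_I, Complex.cos_neg,
    Complex.sin_neg, Complex.cos_two_mul, Complex.sin_two_mul]
  push_cast
  linear_combination 4 * Complex.cos (ξ / 2) ^ 2 * Complex.sin (ξ / 2) ^ 2 * Complex.I_sq +
    (4 - 4 * Complex.cos (ξ / 2) ^ 2) * Complex.sin_sq_add_cos_sq (ξ / 2 : ℂ)

/-- The amplification matrix with `δ = α = 0` and `q = 2ω`; the entries `a`, `b` stand for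
`-λ(e^{iξ} - 1)` and `-λ(1 - e^{-iξ})`. -/
def resonantMatrix (a b ω : ℂ) : Matrix (Fin 4) (Fin 4) ℂ :=
  !![1, a, 0, 0; b, 1 - 2 * ω, 2 * ω, -1; 0, 0, 1 - 2 * ω, 1; 0, 0, -2 * ω, 1]

def resonantEigenvector (a μ : ℂ) : Fin 4 → ℂ :=
  ![-a * (1 - μ), (1 - μ) ^ 2, 0, 0]

def resonantGeneralizedEigenvector (ω μ : ℂ) : Fin 4 → ℂ :=
  ![0, μ - 1, 2 * (1 - μ) - 2 * ω, (μ - 1 + 2 * ω) * (2 * (1 - μ) - 2 * ω)]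

section ResonantMatrix

variable {a b ω μ : ℂ}

theorem resonantMatrix_mulVec_eigenvector (hab : a * b = -(2 * ω))
    (hμ : μ ^ 2 = (2 - 2 * ω) * μ - 1) :
    resonantMatrix a b ω *ᵥ resonantEigenvector a μ = μ • resonantEigenvector a μ := by
  ext i
  fin_cases i <;>
    simp only [resonantMatrix, resonantEigenvector, mulVec, dotProduct, Fin.sum_univ_four,
      Fin.zero_eta, Fin.mk_one, Fin.reduceFinMk,
      of_apply, cons_val', cons_val, cons_val_zero, cons_val_one, cons_val_fin_one, Pi.smul_apply, smul_eq_mul]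
  · ring
  · linear_combination (μ - 1) * hab + (1 - μ) * hμ
  · ring
  · ring

theorem resonantMatrix_mulVec_generalizedEigenvector (hμ : μ ^ 2 = (2 - 2 * ω) * μ - 1) :
    resonantMatrix a b ω *ᵥ resonantGeneralizedEigenvector ω μ =
      μ • resonantGeneralizedEigenvector ω μ + resonantEigenvector a μ := by
  ext i
  fin_cases i <;>
    simp only [resonantMatrix, resonantEigenvector, resonantGeneralizedEigenvector, mulVec,
      dotProduct, Fin.sum_univ_four, Fin.zero_eta, Fin.mk_one, Fin.reduceFinMk,
      of_apply, cons_val', cons_val, cons_val_zero, cons_val_one, cons_val_fin_one,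
      Pi.add_apply, Pi.smul_apply, smul_eq_mul]
  · ring
  · ring
  · ring
  · linear_combination (2 * μ + 2 * ω - 2) * hμ

theorem resonantEigenvector_ne_zero (hμ : μ ≠ 1) : resonantEigenvector a μ ≠ 0 := by
  intro h
  have h₁ : (1 - μ) ^ 2 = 0 := by simpa [resonantEigenvector] using congrFun h 1
  exact hμ (sub_eq_zero.mp (pow_eq_zero_iff two_ne_zero |>.mp h₁)).symm

end ResonantMatrix

theorem resonantMatrix_not_bounded_pow {a b : ℂ} {ω : ℝ} (hab : a * b = -(2 * ω)) (hω₀ : 0 < ω)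
    (hω₁ : ω ≤ 1) : ¬ ∃ C : ℝ, ∀ n : ℕ, ‖resonantMatrix a b ω ^ n‖ ≤ C := by
  obtain ⟨μ, hμ_norm, hμ⟩ := Complex.exists_norm_eq_one_and_sq_eq_two_mul_sub_one (c := 1 - ω)
    (abs_le.mpr ⟨by linarith, by linarith⟩)
  have hμ_root : μ ^ 2 = (2 - 2 * ω) * μ - 1 := by rw [hμ]; push_cast; ring
  have hμ_ne : μ ≠ 1 := by
    rintro rfl
    have : (ω : ℂ) = 0 := by linear_combination hμ_root / 2
    exact hω₀.ne' (by exact_mod_cast this)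
  exact not_bounded_norm_pow_of_jordan_chain hμ_norm (resonantEigenvector_ne_zero hμ_ne)
    (resonantMatrix_mulVec_eigenvector hab hμ_root)
    (resonantMatrix_mulVec_generalizedEigenvector hμ_root)

theorem lorentz_young_unstable_general (ω lam ξ q : ℝ)
    (hq : q = 4 * lam ^ 2 * Real.sin (ξ / 2) ^ 2) (hqres : q = 2 * ω)
    (hq0 : 0 < q) (hq2 : q ≤ 2) :
    ¬ ∃ C : ℝ, ∀ n : ℕ,
      ‖(!![1, -(lam : ℂ) * (Complex.exp (ξ * Complex.I) - 1), 0, 0;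
          -(lam : ℂ) * (1 - Complex.exp (-ξ * Complex.I)), 1 - (q : ℂ),
            2 * (ω : ℂ), -1;
          0, 0, 1 - 2 * (ω : ℂ), 1;
          0, 0, -2 * (ω : ℂ), 1] : Matrix (Fin 4) (Fin 4) ℂ) ^ n‖ ≤ C := by
  have hab : -(lam : ℂ) * (Complex.exp (ξ * Complex.I) - 1) *
      (-(lam : ℂ) * (1 - Complex.exp (-ξ * Complex.I))) = -(2 * ω) := by
    linear_combination (norm := skip) (lam : ℂ) ^ 2 *
      Complex.exp_mul_I_sub_one_mul_one_sub_exp_neg_mul_I ξ -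
      congrArg Complex.ofReal (hq.symm.trans hqres)
    push_cast
    ring
  rw [show (q : ℂ) = 2 * ω by exact_mod_cast hqres]
  exact resonantMatrix_not_bounded_pow hab (by linarith) (by linarith)

/-- Instability of the Lorentz–Young amplification matrix in the harmonic case
`ν = 0` with `ε_s = ε_∞` (`α = 0`), at the resonant value
`q = 4λ²sin²(ξ/2) = 2ω` (with `0 < q ≤ 2`): the powers of `G` are not uniformly
bounded. -/
theorem lorentz_young_unstable (ω lam ξ q : ℝ) (hω : 0 < ω) (hlam : 0 < lam)
    (hq : q = 4 * lam ^ 2 * Real.sin (ξ / 2) ^ 2) (hqres : q = 2 * ω)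
    (hq0 : 0 < q) (hq2 : q ≤ 2) :
    ¬ ∃ C : ℝ, ∀ n : ℕ,
      ‖(!![1, -(lam : ℂ) * (Complex.exp (ξ * Complex.I) - 1), 0, 0;
          -(lam : ℂ) * (1 - Complex.exp (-ξ * Complex.I)), 1 - (q : ℂ),
            2 * (ω : ℂ), -1;
          0, 0, 1 - 2 * (ω : ℂ), 1;
          0, 0, -2 * (ω : ℂ), 1] : Matrix (Fin 4) (Fin 4) ℂ) ^ n‖ ≤ C :=
  lorentz_young_unstable_general ω lam ξ q hq hqres hq0 hq2
end
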